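/- arXiv:2204.06737 — 2 statements merged into one kernel-verified Lean document; each statement's English description precedes it below -/
import Mathlib

section
/- If S ⊆ W₁ × W₂ is a simulation between A-paraconsistent Kripke models M₁ and M₂ and (w₁,w₂) ∈ S, then for every formula φ in the positive fragment (built from ⊥, propositions, ∧, ∨, and ◇), (w₁ ⊨ φ) ≼ (w₂ ⊨ φ) in the order (a,b) ≼ (c,d) iff a ≤ c and d ≤ b. -/
/-! Induction on the positive formula, generalizing over the related pair of states. The lattice
connectives are monotone in both components, and for `◇` the simulation supplies, for each
successor of `w₁`, a related successor of `w₂` with at least the same positive weight; the negative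
component of `◇` is a meet of residua, so it needs the residuum to be antitone in its first
argument and monotone in its second, both of which follow from the adjunction `adj`. -/

open scoped Classical

/-- A paraconsistent Kripke model over a complete lattice `A`,
with states `W` and propositions `P`: a transition relation `R`, positive and
negative weight functions `Rp`, `Rm` (equal to 0 on non-transitions),
and a valuation `V`. -/
structure PModel (A W P : Type*) [CompleteLattice A] where
  R : W → W → Prop
  Rp : W → W → A
  Rm : W → W → A
  V : P → W → A × A
  Rp_zero : ∀ w w', ¬ R w w' → Rp w w' = ⊥
  Rm_zero : ∀ w w', ¬ R w w' → Rm w w' = ⊥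

/-- Formulas of the paraconsistent modal logic. -/
inductive Fm (P : Type*) where
  | bot : Fm P
  | prop : P → Fm P
  | neg : Fm P → Fm P
  | and : Fm P → Fm P → Fm P
  | or : Fm P → Fm P → Fm P
  | imp : Fm P → Fm P → Fm P
  | box : Fm P → Fm P
  | dia : Fm P → Fm P
  | nbox : Fm P → Fm P
  | ndia : Fm P → Fm P
  | circ : Fm P → Fm P

/-- The product metric induced on `A × A` by a metric `d` on `A`. -/
noncomputable def Dtwist {A : Type*} (d : A → A → ℝ) (x y : A × A) : ℝ :=
  Real.sqrt (d x.1 y.1 ^ 2 + d x.2 y.2 ^ 2)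

variable {A W P : Type*}

/-- The satisfaction relation: a pair of truth values in `A × A` for each
state and formula, given a residuum `r` and a metric `d` on `A`. -/
noncomputable def sat [CompleteLattice A] (r : A → A → A) (d : A → A → ℝ)
    (M : PModel A W P) : W → Fm P → A × A
  | w, .bot => (⊥, ⊤)
  | w, .prop p => M.V p w
  | w, .neg φ => Prod.swap (sat r d M w φ)
  | w, .and φ ψ =>
      ((sat r d M w φ).1 ⊓ (sat r d M w ψ).1, (sat r d M w φ).2 ⊔ (sat r d M w ψ).2)
  | w, .or φ ψ =>
      ((sat r d M w φ).1 ⊔ (sat r d M w ψ).1, (sat r d M w φ).2 ⊓ (sat r d M w ψ).2)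
  | w, .imp φ ψ =>
      (r (sat r d M w φ).1 (sat r d M w ψ).1, (sat r d M w φ).1 ⊓ (sat r d M w ψ).2)
  | w, .box φ =>
      (⨅ w', ⨅ _ : M.R w w', r (M.Rp w w') (sat r d M w' φ).1,
       ⨆ w', ⨆ _ : M.R w w', M.Rp w w' ⊓ (sat r d M w' φ).2)
  | w, .dia φ =>
      (⨆ w', ⨆ _ : M.R w w', M.Rp w w' ⊓ (sat r d M w' φ).1,
       ⨅ w', ⨅ _ : M.R w w', r (M.Rp w w') (sat r d M w' φ).2)
  | w, .nbox φ =>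
      (⨆ w', ⨆ _ : M.R w w', M.Rm w w' ⊓ (sat r d M w' φ).2,
       ⨅ w', ⨅ _ : M.R w w', r (M.Rm w w') (sat r d M w' φ).1)
  | w, .ndia φ =>
      (⨅ w', ⨅ _ : M.R w w', r (M.Rm w w') (sat r d M w' φ).2,
       ⨆ w', ⨆ _ : M.R w w', M.Rm w w' ⊓ (sat r d M w' φ).1)
  | w, .circ φ =>
      if Dtwist d (sat r d M w φ) (⊥, ⊥) ≤ Dtwist d (sat r d M w φ) (⊤, ⊤)
      then (⊤, ⊥) else (⊥, ⊤)

/-- The positive fragment: formulas built from ⊥, propositions, ∧, ∨ and ◇. -/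
inductive IsPos {P : Type*} : Fm P → Prop
  | bot : IsPos .bot
  | prop (p : P) : IsPos (.prop p)
  | and {φ ψ} : IsPos φ → IsPos ψ → IsPos (.and φ ψ)
  | or {φ ψ} : IsPos φ → IsPos ψ → IsPos (.or φ ψ)
  | dia {φ} : IsPos φ → IsPos (.dia φ)

section Simulation

variable {W₁ W₂ : Type*} [CompleteLattice A] {r : A → A → A}

/-- The paper's order `≼` on truth-value pairs (evidence for, evidence against). -/
def TwistLE (x y : A × A) : Prop := x.1 ≤ y.1 ∧ y.2 ≤ x.2

theorem residuum_le_residuum (adj : ∀ a b c : A, a ⊓ b ≤ c ↔ b ≤ r a c) {a a' c c' : A}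
    (ha : a' ≤ a) (hc : c ≤ c') : r a c ≤ r a' c' := by
  rw [← adj]
  calc a' ⊓ r a c ≤ a ⊓ r a c := inf_le_inf_right _ ha
    _ ≤ c := (adj a (r a c) c).mpr le_rfl
    _ ≤ c' := hc

theorem sat_dia_twistLE (adj : ∀ a b c : A, a ⊓ b ≤ c ↔ b ≤ r a c) {d : A → A → ℝ}
    {M₁ : PModel A W₁ P} {M₂ : PModel A W₂ P} {φ : Fm P} {w₁ : W₁} {w₂ : W₂}
    (hstep : ∀ w₁', M₁.R w₁ w₁' → ∃ w₂', M₂.R w₂ w₂' ∧ M₁.Rp w₁ w₁' ≤ M₂.Rp w₂ w₂' ∧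
      TwistLE (sat r d M₁ w₁' φ) (sat r d M₂ w₂' φ)) :
    TwistLE (sat r d M₁ w₁ (.dia φ)) (sat r d M₂ w₂ (.dia φ)) := by
  constructor
  · refine iSup₂_mono' fun w₁' hR₁ => ?_
    obtain ⟨w₂', hR₂, hRp, hsat, -⟩ := hstep w₁' hR₁
    exact ⟨w₂', hR₂, inf_le_inf hRp hsat⟩
  · refine iInf₂_mono' fun w₁' hR₁ => ?_
    obtain ⟨w₂', hR₂, hRp, -, hsat⟩ := hstep w₁' hR₁
    exact ⟨w₂', hR₂, residuum_le_residuum adj hRp hsat⟩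

end Simulation

theorem simulation_preserves_positive_general {W₁ W₂ : Type*} [CompleteLattice A]
    (r : A → A → A) (d : A → A → ℝ)
    (adj : ∀ a b c : A, a ⊓ b ≤ c ↔ b ≤ r a c)
    (M₁ : PModel A W₁ P) (M₂ : PModel A W₂ P)
    (S : W₁ → W₂ → Prop)
    (hsim : ∀ w₁ w₂, S w₁ w₂ → ∀ w₁', M₁.R w₁ w₁' →
      ∃ w₂', M₂.R w₂ w₂' ∧ S w₁' w₂' ∧
        M₁.Rp w₁ w₁' ≤ M₂.Rp w₂ w₂' ∧ M₂.Rm w₂ w₂' ≤ M₁.Rm w₁ w₁')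
    (hV : ∀ (p : P) w₁ w₂, S w₁ w₂ →
      (M₁.V p w₁).1 ≤ (M₂.V p w₂).1 ∧ (M₂.V p w₂).2 ≤ (M₁.V p w₁).2)
    (φ : Fm P) (hφ : IsPos φ) (w₁ : W₁) (w₂ : W₂) (hS : S w₁ w₂) :
    (sat r d M₁ w₁ φ).1 ≤ (sat r d M₂ w₂ φ).1 ∧
      (sat r d M₂ w₂ φ).2 ≤ (sat r d M₁ w₁ φ).2 := by
  show TwistLE (sat r d M₁ w₁ φ) (sat r d M₂ w₂ φ)
  induction hφ generalizing w₁ w₂ with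
  | bot => exact ⟨le_rfl, le_rfl⟩
  | prop p => exact hV p w₁ w₂ hS
  | and _ _ ihφ ihψ =>
    obtain ⟨hφ₁, hφ₂⟩ := ihφ w₁ w₂ hS
    obtain ⟨hψ₁, hψ₂⟩ := ihψ w₁ w₂ hS
    exact ⟨inf_le_inf hφ₁ hψ₁, sup_le_sup hφ₂ hψ₂⟩
  | or _ _ ihφ ihψ =>
    obtain ⟨hφ₁, hφ₂⟩ := ihφ w₁ w₂ hS
    obtain ⟨hψ₁, hψ₂⟩ := ihψ w₁ w₂ hS
    exact ⟨sup_le_sup hφ₁ hψ₁, inf_le_inf hφ₂ hψ₂⟩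
  | dia _ ih =>
    refine sat_dia_twistLE adj fun w₁' hR₁ => ?_
    obtain ⟨w₂', hR₂, hS', hRp, -⟩ := hsim w₁ w₂ hS w₁' hR₁
    exact ⟨w₂', hR₂, hRp, ih w₁' w₂' hS'⟩

/-- Simulations preserve positive formulas: if S is a simulation between
A-paraconsistent Kripke models and (w₁,w₂) ∈ S, then for every positive
formula φ, (w₁ ⊨ φ) ≼ (w₂ ⊨ φ). -/
theorem simulation_preserves_positive {W₁ W₂ : Type*} [CompleteLattice A]
    [Fintype W₁] [Fintype W₂]
    (r : A → A → A) (d : A → A → ℝ)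
    (adj : ∀ a b c : A, a ⊓ b ≤ c ↔ b ≤ r a c)
    (prelin : ∀ a b : A, r a b ⊔ r b a = ⊤)
    (M₁ : PModel A W₁ P) (M₂ : PModel A W₂ P)
    (S : W₁ → W₂ → Prop)
    (hsim : ∀ w₁ w₂, S w₁ w₂ → ∀ w₁', M₁.R w₁ w₁' →
      ∃ w₂', M₂.R w₂ w₂' ∧ S w₁' w₂' ∧
        M₁.Rp w₁ w₁' ≤ M₂.Rp w₂ w₂' ∧ M₂.Rm w₂ w₂' ≤ M₁.Rm w₁ w₁')
    (hV : ∀ (p : P) w₁ w₂, S w₁ w₂ →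
      (M₁.V p w₁).1 ≤ (M₂.V p w₂).1 ∧ (M₂.V p w₂).2 ≤ (M₁.V p w₁).2)
    (φ : Fm P) (hφ : IsPos φ) (w₁ : W₁) (w₂ : W₂) (hS : S w₁ w₂) :
    (sat r d M₁ w₁ φ).1 ≤ (sat r d M₂ w₂ φ).1 ∧
      (sat r d M₂ w₂ φ).2 ≤ (sat r d M₁ w₁ φ).2 :=
  simulation_preserves_positive_general r d adj M₁ M₂ S hsim hV φ hφ w₁ w₂ hS
end

section
/- If B ⊆ W₁ × W₂ is a bisimulation between A-paraconsistent Kripke models M₁ and M₂ (matching transitions with identical weight pairs and equal valuations on related states), then for every formula φ of the full language (with ⊥, propositions, ¬, ∧, ∨, →, □, ◇, ∖□, ∖◇, ∘) and every (w,v) ∈ B, (w ⊨ φ) = (v ⊨ φ). -/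
open scoped Classical

variable {A W P : Type*}

/-! Each modal clause of `sat` is a supremum or infimum over the set of values
`c (Rp w w', Rm w w') (w' ⊨ φ)` for the successors `w'` of `w`. At related states a bisimulation
makes these sets equal as soon as `φ` has equal values at related successors, so the theorem
follows by induction on `φ`. -/

namespace PModel

variable {W₁ W₂ : Type*} [CompleteLattice A]

structure IsBisimulation (M₁ : PModel A W₁ P) (M₂ : PModel A W₂ P) (B : W₁ → W₂ → Prop) :
    Prop where
  forth : ∀ p q, B p q → ∀ p', M₁.R p p' →
    ∃ q', M₂.R q q' ∧ B p' q' ∧ M₁.Rp p p' = M₂.Rp q q' ∧ M₁.Rm p p' = M₂.Rm q q'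
  back : ∀ p q, B p q → ∀ q', M₂.R q q' →
    ∃ p', M₁.R p p' ∧ B p' q' ∧ M₁.Rp p p' = M₂.Rp q q' ∧ M₁.Rm p p' = M₂.Rm q q'
  val : ∀ (p : P) w₁ w₂, B w₁ w₂ → M₁.V p w₁ = M₂.V p w₂

namespace IsBisimulation

variable {M₁ : PModel A W₁ P} {M₂ : PModel A W₂ P} {B : W₁ → W₂ → Prop}
  {β : Type*} {t₁ : W₁ → β} {t₂ : W₂ → β} {w : W₁} {v : W₂}

theorem image_succ_eq (hB : M₁.IsBisimulation M₂ B) (ht : ∀ {p q}, B p q → t₁ p = t₂ q)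
    (c : A × A → β → A) (hw : B w v) :
    (fun p' => c (M₁.Rp w p', M₁.Rm w p') (t₁ p')) '' {p' | M₁.R w p'} =
      (fun q' => c (M₂.Rp v q', M₂.Rm v q') (t₂ q')) '' {q' | M₂.R v q'} := by
  ext a
  constructor
  · rintro ⟨p', hp', rfl⟩
    obtain ⟨q', hq', hpq, hRp, hRm⟩ := hB.forth w v hw p' hp'
    exact ⟨q', hq', by simp only [hRp, hRm, ht hpq]⟩
  · rintro ⟨q', hq', rfl⟩
    obtain ⟨p', hp', hpq, hRp, hRm⟩ := hB.back w v hw q' hq'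
    exact ⟨p', hp', by simp only [hRp, hRm, ht hpq]⟩

theorem iSup_succ_eq (hB : M₁.IsBisimulation M₂ B) (ht : ∀ {p q}, B p q → t₁ p = t₂ q)
    (c : A × A → β → A) (hw : B w v) :
    ⨆ p', ⨆ _ : M₁.R w p', c (M₁.Rp w p', M₁.Rm w p') (t₁ p') =
      ⨆ q', ⨆ _ : M₂.R v q', c (M₂.Rp v q', M₂.Rm v q') (t₂ q') := by
  simpa only [sSup_image, Set.mem_ofPred_eq] using congrArg sSup (hB.image_succ_eq ht c hw)

theorem iInf_succ_eq (hB : M₁.IsBisimulation M₂ B) (ht : ∀ {p q}, B p q → t₁ p = t₂ q)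
    (c : A × A → β → A) (hw : B w v) :
    ⨅ p', ⨅ _ : M₁.R w p', c (M₁.Rp w p', M₁.Rm w p') (t₁ p') =
      ⨅ q', ⨅ _ : M₂.R v q', c (M₂.Rp v q', M₂.Rm v q') (t₂ q') := by
  simpa only [sInf_image, Set.mem_ofPred_eq] using congrArg sInf (hB.image_succ_eq ht c hw)

theorem sat_eq (hB : M₁.IsBisimulation M₂ B) (r : A → A → A) (d : A → A → ℝ) (φ : Fm P)
    {w : W₁} {v : W₂} (hw : B w v) : sat r d M₁ w φ = sat r d M₂ v φ := by
  induction φ generalizing w v with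
  | bot => rfl
  | prop p => exact hB.val p w v hw
  | neg φ ih => simp only [sat, ih hw]
  | and φ ψ ihφ ihψ => simp only [sat, ihφ hw, ihψ hw]
  | or φ ψ ihφ ihψ => simp only [sat, ihφ hw, ihψ hw]
  | imp φ ψ ihφ ihψ => simp only [sat, ihφ hw, ihψ hw]
  | circ φ ih => simp only [sat, ih hw]
  | box φ ih =>
    exact Prod.ext (hB.iInf_succ_eq ih (fun e t => r e.1 t.1) hw)
      (hB.iSup_succ_eq ih (fun e t => e.1 ⊓ t.2) hw)
  | dia φ ih =>
    exact Prod.ext (hB.iSup_succ_eq ih (fun e t => e.1 ⊓ t.1) hw)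
      (hB.iInf_succ_eq ih (fun e t => r e.1 t.2) hw)
  | nbox φ ih =>
    exact Prod.ext (hB.iSup_succ_eq ih (fun e t => e.2 ⊓ t.2) hw)
      (hB.iInf_succ_eq ih (fun e t => r e.2 t.1) hw)
  | ndia φ ih =>
    exact Prod.ext (hB.iInf_succ_eq ih (fun e t => r e.2 t.2) hw)
      (hB.iSup_succ_eq ih (fun e t => e.2 ⊓ t.1) hw)

end IsBisimulation

end PModel

theorem bisimulation_invariance_general {W₁ W₂ : Type*} [CompleteLattice A]
    (r : A → A → A) (d : A → A → ℝ)
    (M₁ : PModel A W₁ P) (M₂ : PModel A W₂ P)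
    (B : W₁ → W₂ → Prop)
    (hforth : ∀ p q, B p q → ∀ p', M₁.R p p' →
      ∃ q', M₂.R q q' ∧ B p' q' ∧
        M₁.Rp p p' = M₂.Rp q q' ∧ M₁.Rm p p' = M₂.Rm q q')
    (hback : ∀ p q, B p q → ∀ q', M₂.R q q' →
      ∃ p', M₁.R p p' ∧ B p' q' ∧
        M₁.Rp p p' = M₂.Rp q q' ∧ M₁.Rm p p' = M₂.Rm q q')
    (hV : ∀ (p : P) w₁ w₂, B w₁ w₂ → M₁.V p w₁ = M₂.V p w₂)
    (φ : Fm P) (w : W₁) (v : W₂) (hB : B w v) :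
    sat r d M₁ w φ = sat r d M₂ v φ :=
  PModel.IsBisimulation.sat_eq ⟨hforth, hback, hV⟩ r d φ hB

/-- Bisimulations preserve all formulas: if B is a bisimulation between
A-paraconsistent Kripke models, matching transitions with identical weight
pairs and with equal valuations on related states, then for every formula φ
of the full language and every (w,v) ∈ B, (w ⊨ φ) = (v ⊨ φ). -/
theorem bisimulation_invariance {W₁ W₂ : Type*} [CompleteLattice A]
    [Fintype W₁] [Fintype W₂]
    (r : A → A → A) (d : A → A → ℝ)
    (adj : ∀ a b c : A, a ⊓ b ≤ c ↔ b ≤ r a c)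
    (prelin : ∀ a b : A, r a b ⊔ r b a = ⊤)
    (hd₀ : ∀ a b : A, d a b = 0 ↔ a = b)
    (hdsymm : ∀ a b : A, d a b = d b a)
    (hdtri : ∀ a b c : A, d a b ≤ d a c + d c b)
    (M₁ : PModel A W₁ P) (M₂ : PModel A W₂ P)
    (B : W₁ → W₂ → Prop)
    (hforth : ∀ p q, B p q → ∀ p', M₁.R p p' →
      ∃ q', M₂.R q q' ∧ B p' q' ∧
        M₁.Rp p p' = M₂.Rp q q' ∧ M₁.Rm p p' = M₂.Rm q q')
    (hback : ∀ p q, B p q → ∀ q', M₂.R q q' →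
      ∃ p', M₁.R p p' ∧ B p' q' ∧
        M₁.Rp p p' = M₂.Rp q q' ∧ M₁.Rm p p' = M₂.Rm q q')
    (hV : ∀ (p : P) w₁ w₂, B w₁ w₂ → M₁.V p w₁ = M₂.V p w₂)
    (φ : Fm P) (w : W₁) (v : W₂) (hB : B w v) :
    sat r d M₁ w φ = sat r d M₂ v φ :=
  bisimulation_invariance_general r d M₁ M₂ B hforth hback hV φ w v hB
end
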